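/- arXiv:1505.02318 — 12 statements merged into one kernel-verified Lean document; each statement's English description precedes it below -/
import Mathlib

section
/- For every function a : ℕ → ℕ satisfying a(0) = 0, a(1) = 1, and a(k) = a(k − a(k−1)) + a(k − 1 − a(k−2)) for all k ≥ 2, and for every k ∈ ℕ, one has S₂(k) = 2 · a(k). -/
/-- The Smarandache primitive number `S₂(k)`: the least `n` such that `2^k` divides `n!`. -/
noncomputable def S2 (k : ℕ) : ℕ := sInf {n : ℕ | 2 ^ k ∣ Nat.factorial n}

/-!
Let `F m = v₂((2m)!)`. By Legendre, `v₂((2m)!) = m + v₂(m!)` and `v₂((2m+1)!) = v₂((2m)!)`, so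
`F m = m + F ⌊m/2⌋`, and `S₂(k) = 2 b(k)` where `b` is the lower inverse of `F`:
`b k ≤ m ↔ k ≤ F m`. Since `F` increases by `1 + v₂(m)` at `m`, the sequence `b` is slow (steps of
0 or 1) and takes each odd value once. From `F m = m + F ⌊m/2⌋` one reads off
`b (n - b (n - 1)) = ⌈b n / 2⌉` and `⌈b (n - 1) / 2⌉ = ⌊b n / 2⌋`, which add up to the
meta-Fibonacci recursion `b k = b (k - b (k - 1)) + b (k - 1 - b (k - 2))`. The recursion and the
initial values determine the sequence, so `b = a`.
-/

open Nat

namespace MetaFib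

def Recurrence (a : ℕ → ℕ) : Prop :=
  ∀ k, 2 ≤ k → a k = a (k - a (k - 1)) + a (k - 1 - a (k - 2))

theorem eq_of_recurrence {a b : ℕ → ℕ} (ha : Recurrence a) (hb : Recurrence b)
    (h0 : a 0 = b 0) (h1 : a 1 = b 1) (hpos : ∀ k, 1 ≤ k → 1 ≤ b k) : a = b := by
  funext k
  induction k using Nat.strong_induction_on with
  | _ k ih =>
    rcases k with _ | _ | k
    · exact h0
    · exact h1
    · have hk : 2 ≤ k + 2 := by omega
      have e1 : a (k + 2 - 1) = b (k + 2 - 1) := ih _ (by omega)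
      have e2 : a (k + 2 - 2) = b (k + 2 - 2) := ih _ (by omega)
      have hb1 := hpos (k + 2 - 1) (by omega)
      rw [ha _ hk, hb _ hk, e1, e2, ih _ (by omega), ih _ (by omega)]

def F (m : ℕ) : ℕ := padicValNat 2 (2 * m)!

theorem F_zero : F 0 = 0 := by simp [F]

theorem F_eq_add_F_div_two (m : ℕ) : F m = m + F (m / 2) := by
  have h : padicValNat 2 m ! = padicValNat 2 (2 * (m / 2))! := by
    conv_lhs => rw [← Nat.div_add_mod m 2]
    exact padicValNat_factorial_mul_add _ (Nat.mod_lt m two_pos)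
  rw [F, F, padicValNat_factorial_mul, h, add_comm]

theorem strictMono_F : StrictMono F := strictMono_nat_of_lt_succ fun m => by
  simp only [F, padicValNat_factorial_mul, factorial_succ,
    padicValNat.mul (succ_ne_zero m) (factorial_ne_zero m)]
  omega

section LowerInverse

variable {b : ℕ → ℕ} (hb : GaloisConnection b F)
include hb

theorem lt_apply_iff {k m : ℕ} : m < b k ↔ F m < k := by
  simpa using (hb (a := k) (b := m)).not

theorem apply_zero : b 0 = 0 :=
  Nat.le_zero.1 (hb.l_le (Nat.zero_le _))

theorem apply_one : b 1 = 1 := by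
  refine le_antisymm (hb.l_le ?_) ((lt_apply_iff hb).2 ?_)
  · rw [F_eq_add_F_div_two]; omega
  · rw [F_zero]; omega

theorem one_le_apply {n : ℕ} (hn : 1 ≤ n) : 1 ≤ b n :=
  apply_one hb ▸ hb.monotone_l hn

theorem apply_succ_le (n : ℕ) : b (n + 1) ≤ b n + 1 :=
  hb.l_le ((hb.le_u_l n).trans_lt (strictMono_F (lt_add_one _)))

theorem apply_sub_apply_pred {n : ℕ} (hn : 1 ≤ n) : b (n - b (n - 1)) = (b n + 1) / 2 := by
  set m := b n
  set p := b (n - 1)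
  have hm : 1 ≤ m := one_le_apply hb hn
  have hpm : p ≤ m := hb.monotone_l (n.sub_le 1)
  have hmp : m ≤ p + 1 := by
    simpa [m, Nat.sub_add_cancel hn] using apply_succ_le hb (n - 1)
  have hn_le : n ≤ F m := hb.le_u_l n
  have hp_le : n - 1 ≤ F p := hb.le_u_l (n - 1)
  have hm_lt : F (m - 1) < n := (lt_apply_iff hb).1 (by omega)
  obtain ⟨j, hj⟩ : ∃ j, j = (m - 1) / 2 := ⟨_, rfl⟩
  have e1 : F m = m + F (m / 2) := F_eq_add_F_div_two m
  have e2 : F (m - 1) = m - 1 + F j := hj ▸ F_eq_add_F_div_two (m - 1)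
  have e3 : F (m / 2) ≤ F (j + 1) := strictMono_F.monotone (by omega)
  have e4 : F j < F (j + 1) := strictMono_F (lt_add_one j)
  rw [show (m + 1) / 2 = j + 1 by omega]
  rcases (by omega : p = m ∨ p + 1 = m) with hp | hp
  · have : F (m - 1) < n - 1 := (lt_apply_iff hb).1 (by omega)
    exact le_antisymm (hb.l_le (by omega)) ((lt_apply_iff hb).2 (by omega))
  · rw [show p = m - 1 by omega] at hp_le
    exact le_antisymm (hb.l_le (by omega)) ((lt_apply_iff hb).2 (by omega))

theorem apply_succ_div_two (n : ℕ) : b (n + 1) / 2 = (b n + 1) / 2 := by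
  have hmono : b n ≤ b (n + 1) := hb.monotone_l n.le_succ
  have hsucc := apply_succ_le hb n
  rcases Nat.even_or_odd' (b n) with ⟨t, ht | ht⟩
  · omega
  · -- `b` takes the value `2t + 1` only at `F (2t) + 1`
    have hlt : F (2 * t) < n := (lt_apply_iff hb).1 (by omega)
    have hle : n + 1 ≤ F (b (n + 1)) := hb.le_u_l _
    have e1 := F_eq_add_F_div_two (2 * t)
    have e2 := F_eq_add_F_div_two (2 * t + 1)
    rw [show 2 * t / 2 = t by omega] at e1
    rw [show (2 * t + 1) / 2 = t by omega] at e2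
    rcases (by omega : b (n + 1) = 2 * t + 1 ∨ b (n + 1) = 2 * t + 2) with h | h
    · rw [h] at hle; omega
    · omega

theorem recurrence : Recurrence b := fun k hk => by
  have h1 := apply_sub_apply_pred hb (n := k) (by omega)
  have h2 := apply_sub_apply_pred hb (n := k - 1) (by omega)
  have h3 := apply_succ_div_two hb (k - 1)
  rw [show k - 1 - 1 = k - 2 by omega] at h2
  rw [Nat.sub_add_cancel (by omega)] at h3
  omega

theorem eq_of_recurrence_of_galoisConnection {a : ℕ → ℕ} (ha : Recurrence a) (h0 : a 0 = 0)
    (h1 : a 1 = 1) : a = b :=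
  eq_of_recurrence ha (recurrence hb) (h0.trans (apply_zero hb).symm)
    (h1.trans (apply_one hb).symm) fun _ => one_le_apply hb

end LowerInverse

theorem galoisConnection_S2 : GaloisConnection S2 fun n => padicValNat 2 n ! := by
  intro k n
  rw [← padicValNat_dvd_iff_le (factorial_ne_zero n)]
  refine ⟨fun h => (Nat.sInf_mem (s := {n | 2 ^ k ∣ n !}) ⟨2 * k, ?_⟩).trans
    (factorial_dvd_factorial h), fun h => Nat.sInf_le h⟩
  rw [Set.mem_ofPred_eq, padicValNat_dvd_iff_le (factorial_ne_zero _), padicValNat_factorial_mul]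
  omega

theorem galoisConnection_S2_div_two : GaloisConnection (fun k => S2 k / 2) F := by
  intro k m
  rw [Nat.div_le_iff_le_mul_add_pred two_pos, galoisConnection_S2, F]
  exact iff_of_eq (congrArg _ (padicValNat_factorial_mul_add m one_lt_two))

theorem two_mul_S2_div_two (k : ℕ) : 2 * (S2 k / 2) = S2 k := by
  refine le_antisymm (Nat.mul_div_le _ _) ((galoisConnection_S2 _ _).2 ?_)
  exact galoisConnection_S2_div_two.le_u_l k

end MetaFib

theorem stmt_0 (a : ℕ → ℕ) (h0 : a 0 = 0) (h1 : a 1 = 1)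
    (hrec : ∀ k, 2 ≤ k → a k = a (k - a (k - 1)) + a (k - 1 - a (k - 2))) :
    ∀ k, S2 k = 2 * a k := by
  intro k
  rw [MetaFib.eq_of_recurrence_of_galoisConnection MetaFib.galoisConnection_S2_div_two hrec h0 h1,
    MetaFib.two_mul_S2_div_two]
end

section
/- Let f : ℕ → ℕ satisfy f(0) = 0, f(1) = 2, and for every k ≥ 2, f(k) = 2·(k − i + 1) where i is the least element of {1, …, k−1} with k − i + 1 ≤ f(i) (such i always exists). Then f(k) = S₂(k) for every k ∈ ℕ. -/
/-- The least `i ∈ {1, …, k-1}` with `k - i + 1 ≤ f i`. -/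
noncomputable def minIdx (f : ℕ → ℕ) (k : ℕ) : ℕ :=
  sInf {i : ℕ | 1 ≤ i ∧ i ≤ k - 1 ∧ k - i + 1 ≤ f i}

namespace SPrim

/-- 2-adic valuation of `n!`. -/
noncomputable def v (n : ℕ) : ℕ := (Nat.factorial n).factorization 2

lemma dvd_iff (k n : ℕ) : 2 ^ k ∣ Nat.factorial n ↔ k ≤ v n := by
  rw [v, ← Nat.Prime.pow_dvd_iff_le_factorization Nat.prime_two (Nat.factorial_ne_zero n)]

lemma v_zero : v 0 = 0 := by simp [v]

lemma v_one : v 1 = 0 := by simp [v]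

lemma v_succ (n : ℕ) : v (n + 1) = v n + (n + 1).factorization 2 := by
  rw [v, Nat.factorial_succ,
    Nat.factorization_mul (Nat.succ_ne_zero n) (Nat.factorial_ne_zero n)]
  simp [v, add_comm]

lemma v_mono : Monotone v :=
  monotone_nat_of_le_succ fun n => by rw [v_succ]; omega

lemma fact_odd (m : ℕ) : (2 * m + 1).factorization 2 = 0 :=
  Nat.factorization_eq_zero_of_not_dvd (by omega)

lemma v_two_mul (m : ℕ) : v (2 * m) = m + v m := by
  induction m with
  | zero => simp [v_zero]
  | succ m ih =>
    have h1 : 2 * (m + 1) = (2 * m + 1) + 1 := by ring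
    rw [h1, v_succ, show 2 * m + 1 = (2 * m) + 1 by ring, v_succ, fact_odd, ih]
    have h2 : (2 * m + 1 + 1).factorization 2 = 1 + (m + 1).factorization 2 := by
      rw [show 2 * m + 1 + 1 = 2 * (m + 1) by ring,
        Nat.factorization_mul (by norm_num) (Nat.succ_ne_zero m)]
      simp [Nat.Prime.factorization_self Nat.prime_two]
    rw [h2, v_succ]
    ring

lemma g_mono : Monotone (fun m => m + v m) :=
  fun a b hab => add_le_add hab (v_mono hab)

lemma setne (k : ℕ) : {m : ℕ | k ≤ m + v m}.Nonempty := ⟨k, by simp⟩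

lemma S2_eq (k : ℕ) : S2 k = sInf {n : ℕ | k ≤ v n} := by
  unfold S2; congr 1; ext n; exact dvd_iff k n

lemma S2_le_iff (k n : ℕ) : S2 k ≤ n ↔ k ≤ v n := by
  rw [S2_eq]
  constructor
  · intro h
    have hne : {n : ℕ | k ≤ v n}.Nonempty := ⟨2 * k, by
      simp only [Set.mem_setOf_eq, v_two_mul]; omega⟩
    have hmem := Nat.sInf_mem hne
    exact le_trans hmem (v_mono h)
  · exact fun h => Nat.sInf_le h

lemma S2_eq_two_mul (k : ℕ) : S2 k = 2 * sInf {m : ℕ | k ≤ m + v m} := by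
  set M := sInf {m : ℕ | k ≤ m + v m} with hM
  have hMmem : k ≤ M + v M := Nat.sInf_mem (setne k)
  apply le_antisymm
  · rw [S2_le_iff, v_two_mul]; exact hMmem
  · -- 2M ≤ S2 k
    have hS : k ≤ v (S2 k) := (S2_le_iff k (S2 k)).mp le_rfl
    rcases Nat.even_or_odd (S2 k) with ⟨m, hm⟩ | ⟨m, hm⟩
    · have hm' : S2 k = 2 * m := by omega
      rw [hm', v_two_mul] at hS
      have : M ≤ m := Nat.sInf_le hS
      omega
    · have hm' : S2 k = (2 * m) + 1 := by omega
      rw [hm', v_succ, fact_odd, v_two_mul] at hS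
      have : M ≤ m := Nat.sInf_le (by simpa using hS)
      omega

end SPrim

theorem stmt_1 (f : ℕ → ℕ) (h0 : f 0 = 0) (h1 : f 1 = 2)
    (hrec : ∀ k, 2 ≤ k → f k = 2 * (k - minIdx f k + 1)) :
    ∀ k, f k = S2 k := by
  open SPrim in
  intro k
  induction k using Nat.strong_induction_on with
  | _ k ih =>
    match k, ih with
    | 0, _ =>
      rw [h0, S2_eq_two_mul]
      have : sInf {m : ℕ | 0 ≤ m + v m} = 0 := by
        simp [Nat.sInf_eq_zero]
      omega
    | 1, _ =>
      rw [h1, S2_eq_two_mul]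
      have h0' : (0 : ℕ) ∉ {m : ℕ | 1 ≤ m + v m} := by simp [v_zero]
      have h1' : (1 : ℕ) ∈ {m : ℕ | 1 ≤ m + v m} := by simp
      have hle : sInf {m : ℕ | 1 ≤ m + v m} ≤ 1 := Nat.sInf_le h1'
      have hmem := Nat.sInf_mem (⟨1, h1'⟩ : {m : ℕ | 1 ≤ m + v m}.Nonempty)
      have : sInf {m : ℕ | 1 ≤ m + v m} ≠ 0 := fun h => h0' (h ▸ hmem)
      omega
    | (n + 2), ih =>
      set k := n + 2 with hk
      have hk2 : 2 ≤ k := by omega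
      set M := sInf {m : ℕ | k ≤ m + v m} with hM
      have hMmem : k ≤ M + v M := Nat.sInf_mem (setne k)
      have hMle : M ≤ k := Nat.sInf_le (by simp)
      have hM2 : 2 ≤ M := by
        by_contra h
        interval_cases M
        · rw [v_zero] at hMmem; omega
        · rw [v_one] at hMmem; omega
      have hgM1 : (M - 1) + v (M - 1) < k := by
        have := Nat.notMem_of_lt_sInf (show M - 1 < M by omega)
        simp only [Set.mem_setOf_eq, not_le, ← hM] at this
        exact this
      -- characterize the minIdx set
      have hset : {i : ℕ | 1 ≤ i ∧ i ≤ k - 1 ∧ k - i + 1 ≤ f i}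
          = {i : ℕ | 1 ≤ i ∧ i ≤ k - 1 ∧ (k - i) + v (k - i) < k} := by
        ext i
        simp only [Set.mem_setOf_eq]
        constructor
        · rintro ⟨hi1, hi2, hi3⟩
          refine ⟨hi1, hi2, ?_⟩
          rw [ih i (by omega)] at hi3
          have hcond : ¬ (S2 i ≤ k - i) := by omega
          rw [S2_le_iff] at hcond
          omega
        · rintro ⟨hi1, hi2, hi3⟩
          refine ⟨hi1, hi2, ?_⟩
          rw [ih i (by omega)]
          have hcond : ¬ (i ≤ v (k - i)) := by omega
          rw [← S2_le_iff] at hcond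
          omega
      have hi0mem : (k - M + 1) ∈ {i : ℕ | 1 ≤ i ∧ i ≤ k - 1 ∧ (k - i) + v (k - i) < k} := by
        refine ⟨by omega, by omega, ?_⟩
        have : k - (k - M + 1) = M - 1 := by omega
        rw [this]; exact hgM1
      have hlb : ∀ i ∈ {i : ℕ | 1 ≤ i ∧ i ≤ k - 1 ∧ (k - i) + v (k - i) < k},
          k - M + 1 ≤ i := by
        rintro i ⟨hi1, hi2, hi3⟩
        have hlt : k - i < M := by
          by_contra h
          have := g_mono (show M ≤ k - i by omega)
          simp only at this
          omega
        omega
      have hmin : minIdx f k = k - M + 1 := by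
        rw [minIdx, hset]
        have hmem2 := Nat.sInf_mem (⟨k - M + 1, hi0mem⟩ :
          {i : ℕ | 1 ≤ i ∧ i ≤ k - 1 ∧ (k - i) + v (k - i) < k}.Nonempty)
        exact le_antisymm (Nat.sInf_le hi0mem) (hlb _ hmem2)
      rw [hrec k hk2, hmin, S2_eq_two_mul, ← hM]
      omega
end

section
/- Let f : ℕ → ℕ satisfy f(0) = 0, f(1) = 2, and for every k ≥ 2, f(k) = 2·(k − i + 1) where i is the least element of {1, …, k−1} with k − i + 1 ≤ f(i) (such i always exists), and define i_f(k) := k + 1 − f(k)/2. Then for every k ≥ 2 one has the nested (meta-Fibonacci) recursion f(k) = f(i_f(k−1)) + f(i_f(k−2)); moreover i_f(k−1) < k and i_f(k−2) < k. -/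
/-- The index function `i_f(k) := k + 1 - f(k)/2`. -/
def iF (f : ℕ → ℕ) (k : ℕ) : ℕ := k + 1 - f k / 2

/-- Induction package. -/
structure Pk (f : ℕ → ℕ) (k : ℕ) : Prop where
  m1 : 1 ≤ minIdx f k
  m2 : minIdx f k + 1 ≤ k
  m3 : k + 1 ≤ f (minIdx f k) + minIdx f k
  hmin : ∀ j, 1 ≤ j → j < minIdx f k → f j + j ≤ k
  hI : iF f k = minIdx f k
  istep1 : iF f (k-1) ≤ iF f k
  istep2 : iF f k ≤ iF f (k-1) + 1
  fmono1 : f (k-1) ≤ f k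
  fmono2 : f k ≤ f (k-1) + 2
  hmain : f k = f (iF f (k-1)) + f (iF f (k-2))
  hQ : f (iF f k) ≤ f (iF f (k-2)) + 2

theorem pk_all (f : ℕ → ℕ) (h0 : f 0 = 0) (h1 : f 1 = 2)
    (hrec : ∀ k, 2 ≤ k → f k = 2 * (k - minIdx f k + 1)) :
    ∀ k, 2 ≤ k → Pk f k := by
  have hI0 : iF f 0 = 1 := by simp [iF, h0]
  have hI1 : iF f 1 = 1 := by simp [iF, h1]
  have hev : ∀ j, f j % 2 = 0 := by
    intro j
    match j with
    | 0 => simp [h0]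
    | 1 => simp [h1]
    | (m+2) => rw [hrec (m+2) (by omega)]; omega
  intro k
  induction k using Nat.strong_induction_on with
  | _ k ih =>
    intro hk
    rcases Nat.lt_or_ge k 3 with h3 | h3
    · -- base case k = 2
      have hk2 : k = 2 := by omega
      subst hk2
      have hS : (1:ℕ) ∈ {i : ℕ | 1 ≤ i ∧ i ≤ 2 - 1 ∧ 2 - i + 1 ≤ f i} := by
        refine ⟨le_refl 1, by norm_num, ?_⟩
        simp [h1]
      have hm2 : minIdx f 2 = 1 := by
        have hmem : minIdx f 2 ∈ {i : ℕ | 1 ≤ i ∧ i ≤ 2 - 1 ∧ 2 - i + 1 ≤ f i} :=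
          Nat.sInf_mem ⟨1, hS⟩
        have h1' := hmem.1
        have h2' : minIdx f 2 ≤ 1 := Nat.sInf_le hS
        omega
      have hf2 : f 2 = 4 := by rw [hrec 2 (by norm_num), hm2]
      have hI2 : iF f 2 = 1 := by simp [iF, hf2]
      refine ⟨?_, ?_, ?_, ?_, ?_, ?_, ?_, ?_, ?_, ?_, ?_⟩
      · rw [hm2]
      · rw [hm2]
      · rw [hm2, h1]
      · intro j hj hjlt; rw [hm2] at hjlt; omega
      · rw [hI2, hm2]
      · show iF f 1 ≤ iF f 2; rw [hI1, hI2]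
      · show iF f 2 ≤ iF f 1 + 1; rw [hI1, hI2]; omega
      · show f 1 ≤ f 2; rw [h1, hf2]; omega
      · show f 2 ≤ f 1 + 2; rw [h1, hf2]
      · show f 2 = f (iF f 1) + f (iF f 0); rw [hI1, hI0, h1, hf2]
      · show f (iF f 2) ≤ f (iF f 0) + 2; rw [hI2, hI0, h1]; omega
    · -- step: k = n + 1 with n ≥ 2
      obtain ⟨n, rfl⟩ : ∃ n, k = n + 1 := ⟨k - 1, by omega⟩
      have hn2 : 2 ≤ n := by omega
      have p := ih n (by omega) hn2
      -- monotonicity of f on [1, n]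
      have mono : ∀ b, b ≤ n → ∀ a, 1 ≤ a → a ≤ b → f a ≤ f b := by
        intro b
        induction b with
        | zero => intro _ a ha hab; omega
        | succ b ihb =>
          intro hb a ha hab
          rcases Nat.eq_or_lt_of_le hab with h | h
          · exact le_of_eq (congrArg f h)
          · have hab' : a ≤ b := by omega
            have hb1 : 1 ≤ b := le_trans ha hab'
            have hfb : f b ≤ f (b+1) := by
              have q := ih (b+1) (by omega) (by omega)
              have := q.fmono1
              simpa using this
            exact le_trans (ihb (by omega) a ha hab') hfb
      have hIle : ∀ j, j ≤ n → 1 ≤ iF f j ∧ iF f j ≤ n := by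
        intro j hj
        match j with
        | 0 => rw [hI0]; omega
        | 1 => rw [hI1]; omega
        | (m+2) =>
          have q := ih (m+2) (by omega) (by omega)
          rw [q.hI]
          have := q.m1; have := q.m2
          omega
      have hfk : f n = 2 * (n - minIdx f n + 1) := hrec n hn2
      -- chain iF f (n-2) ≤ iF f (n-1) ≤ iF f n
      have hch1 : iF f (n-1) ≤ iF f n := p.istep1
      have hch0 : iF f (n-2) ≤ iF f (n-1) := by
        rcases Nat.eq_or_lt_of_le hn2 with h | h
        · rw [← h]; norm_num [hI0, hI1]
        · have q := ih (n-1) (by omega) (by omega)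
          have := q.istep1
          rwa [show n-1-1 = n-2 from by omega] at this
      have hBA : f (iF f (n-1)) ≤ f (minIdx f n) := by
        rw [← p.hI]
        refine mono (iF f n) ?_ _ ?_ hch1
        · rw [p.hI]; have := p.m2; omega
        · exact (hIle (n-1) (by omega)).1
      have hCB : f (iF f (n-2)) ≤ f (iF f (n-1)) := by
        refine mono (iF f (n-1)) ?_ _ ?_ hch0
        · exact (hIle (n-1) (by omega)).2
        · exact (hIle (n-2) (by omega)).1
      -- membership of minIdx f n + 1 in the set at n+1
      have hmono' : f (minIdx f n) ≤ f (minIdx f n + 1) :=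
        mono (minIdx f n + 1) (by have := p.m2; omega) _ p.m1 (by omega)
      have hmem_succ : minIdx f n + 1 ∈
          {i : ℕ | 1 ≤ i ∧ i ≤ (n+1) - 1 ∧ (n+1) - i + 1 ≤ f i} := by
        refine ⟨by omega, by have := p.m2; omega, ?_⟩
        have := p.m3; have := p.m2
        omega
      have hne : ({i : ℕ | 1 ≤ i ∧ i ≤ (n+1) - 1 ∧ (n+1) - i + 1 ≤ f i}).Nonempty :=
        ⟨_, hmem_succ⟩
      have hmem' : minIdx f (n+1) ∈
          {i : ℕ | 1 ≤ i ∧ i ≤ (n+1) - 1 ∧ (n+1) - i + 1 ≤ f i} := Nat.sInf_mem hne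
      have hle : minIdx f (n+1) ≤ minIdx f n + 1 := Nat.sInf_le hmem_succ
      have hge : minIdx f n ≤ minIdx f (n+1) := by
        by_contra h
        push_neg at h
        have h1' := hmem'.1
        have h2' := hmem'.2.1
        have h3' := hmem'.2.2
        have := p.hmin _ h1' h
        omega
      have hfk1 : f (n+1) = 2 * ((n+1) - minIdx f (n+1) + 1) := hrec (n+1) (by omega)
      have hIeq1 : iF f (n+1) = minIdx f (n+1) := by
        have h2' := hmem'.2.1
        simp only [iF]
        omega
      have evA := hev (minIdx f n)
      have evC := hev (iF f (n-2))
      by_cases hstay : n + 2 ≤ f (minIdx f n) + minIdx f n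
      · -- stay case: minIdx f (n+1) = minIdx f n
        have hstaymem : minIdx f n ∈
            {i : ℕ | 1 ≤ i ∧ i ≤ (n+1) - 1 ∧ (n+1) - i + 1 ≤ f i} := by
          refine ⟨p.m1, by have := p.m2; omega, by have := p.m2; omega⟩
        have heq : minIdx f (n+1) = minIdx f n :=
          le_antisymm (Nat.sInf_le hstaymem) hge
        have hmain := p.hmain
        have hQ' : f (minIdx f n) ≤ f (iF f (n-2)) + 2 := by
          rw [← p.hI]; exact p.hQ
        have hA2 : f (minIdx f n) = f (iF f (n-2)) + 2 := by
          have := p.m2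
          omega
        have hstep : f (n+1) = f n + 2 := by
          have := p.m2
          rw [heq] at hfk1
          omega
        refine ⟨?_, ?_, ?_, ?_, hIeq1, ?_, ?_, ?_, ?_, ?_, ?_⟩
        · rw [heq]; exact p.m1
        · rw [heq]; have := p.m2; omega
        · rw [heq]; omega
        · intro j hj hjlt
          rw [heq] at hjlt
          have := p.hmin j hj hjlt
          omega
        · show iF f n ≤ iF f (n+1); rw [hIeq1, heq, p.hI]
        · show iF f (n+1) ≤ iF f n + 1; rw [hIeq1, heq, p.hI]; omega
        · show f n ≤ f (n+1); omega
        · show f (n+1) ≤ f n + 2; omega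
        · show f (n+1) = f (iF f n) + f (iF f (n-1))
          rw [p.hI]
          omega
        · show f (iF f (n+1)) ≤ f (iF f (n-1)) + 2
          rw [hIeq1, heq]
          omega
      · -- move case: minIdx f (n+1) = minIdx f n + 1
        have hne'' : minIdx f (n+1) ≠ minIdx f n := by
          intro h
          apply hstay
          have h3' := hmem'.2.2
          rw [h] at h3'
          have := p.m2
          omega
        have heq : minIdx f (n+1) = minIdx f n + 1 := by omega
        have hnots : f (minIdx f n) + minIdx f n ≤ n + 1 := by omega
        have hmain := p.hmain
        have hAB : f (minIdx f n) = f (iF f (n-1)) ∧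
            f (minIdx f n) = f (iF f (n-2)) := by
          have := p.m2
          omega
        have hstep : f (n+1) = f n := by
          have := p.m2
          rw [heq] at hfk1
          omega
        have hq : f (minIdx f n + 1) ≤ f (minIdx f n) + 2 := by
          have q := ih (minIdx f n + 1) (by have := p.m2; omega) (by have := p.m1; omega)
          have := q.fmono2
          simpa using this
        refine ⟨?_, ?_, ?_, ?_, hIeq1, ?_, ?_, ?_, ?_, ?_, ?_⟩
        · rw [heq]; omega
        · rw [heq]; have := p.m2; omega
        · rw [heq]
          have := p.m3
          omega
        · intro j hj hjlt
          rw [heq] at hjlt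
          rcases Nat.lt_or_ge j (minIdx f n) with h | h
          · have := p.hmin j hj h; omega
          · have hj' : j = minIdx f n := by omega
            rw [hj']; omega
        · show iF f n ≤ iF f (n+1); rw [hIeq1, heq, p.hI]; omega
        · show iF f (n+1) ≤ iF f n + 1; rw [hIeq1, heq, p.hI]
        · show f n ≤ f (n+1); omega
        · show f (n+1) ≤ f n + 2; omega
        · show f (n+1) = f (iF f n) + f (iF f (n-1))
          rw [p.hI]
          omega
        · show f (iF f (n+1)) ≤ f (iF f (n-1)) + 2
          rw [hIeq1, heq]
          omega

theorem stmt_2 (f : ℕ → ℕ) (h0 : f 0 = 0) (h1 : f 1 = 2)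
    (hrec : ∀ k, 2 ≤ k → f k = 2 * (k - minIdx f k + 1)) :
    ∀ k, 2 ≤ k →
      f k = f (iF f (k - 1)) + f (iF f (k - 2)) ∧ iF f (k - 1) < k ∧ iF f (k - 2) < k := by
  have hI0 : iF f 0 = 1 := by simp [iF, h0]
  have hI1 : iF f 1 = 1 := by simp [iF, h1]
  have key := pk_all f h0 h1 hrec
  intro k hk
  refine ⟨(key k hk).hmain, ?_, ?_⟩
  · rcases Nat.lt_or_ge k 3 with h | h
    · have : k = 2 := by omega
      rw [this, show (2:ℕ) - 1 = 1 from rfl, hI1]; omega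
    · have q := key (k-1) (by omega)
      rw [q.hI]
      have := q.m2
      omega
  · rcases Nat.lt_or_ge k 4 with h | h
    · interval_cases k
      · rw [show (2:ℕ) - 2 = 0 from rfl, hI0]; omega
      · rw [show (3:ℕ) - 2 = 1 from rfl, hI1]; omega
    · have q := key (k-2) (by omega)
      rw [q.hI]
      have := q.m2
      omega
end

section
/- Let f : ℕ → ℕ satisfy f(0) = 0, f(1) = 2, and for every k ≥ 2, f(k) = 2·(k − i + 1) where i is the least element of {1, …, k−1} with k − i + 1 ≤ f(i), and let a : ℕ → ℕ satisfy a(0) = 0, a(1) = 1, and a(k) = a(k − a(k−1)) + a(k − 1 − a(k−2)) for all k ≥ 2. Then f(k) = 2 · a(k) for all k ∈ ℕ. -/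
namespace Stmt3Aux

def B : ℕ → ℕ
  | 0 => 0
  | (n+1) => (n+1) + B ((n+1)/2)
decreasing_by exact Nat.div_lt_self (Nat.succ_pos n) one_lt_two

lemma B_rec (n : ℕ) : B n = n + B (n/2) := by
  cases n with
  | zero => simp [B]
  | succ m => simp [B]

lemma B_lt_succ : ∀ n, B n < B (n+1) := by
  intro n
  induction n using Nat.strong_induction_on with
  | _ n ih =>
    match n with
    | 0 => simp [B]
    | (m+1) =>
      have h1 : B (m+1) = (m+1) + B ((m+1)/2) := B_rec _
      have h2 : B (m+1+1) = (m+1+1) + B ((m+1+1)/2) := B_rec _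
      have hcases : (m+1+1)/2 = (m+1)/2 ∨ (m+1+1)/2 = (m+1)/2 + 1 := by omega
      rcases hcases with h | h
      · rw [h] at h2; omega
      · have := ih ((m+1)/2) (by omega)
        rw [h] at h2; omega

lemma B_mono : Monotone B := monotone_nat_of_le_succ (fun n => (B_lt_succ n).le)

lemma le_B_self (n : ℕ) : n ≤ B n := by have := B_rec n; omega

noncomputable def A (n : ℕ) : ℕ := sInf {v | n ≤ B v}

lemma le_B_A (n : ℕ) : n ≤ B (A n) := by
  have h : n ∈ {v | n ≤ B v} := le_B_self n
  exact Nat.sInf_mem ⟨n, h⟩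

lemma A_le {n v : ℕ} (h : n ≤ B v) : A n ≤ v := Nat.sInf_le h

lemma lt_A {n v : ℕ} (h : B v < n) : v < A n := by
  by_contra hc
  push_neg at hc
  have h1 := le_B_A n
  have h2 := B_mono hc
  omega

lemma A_eq {n v : ℕ} (h1 : B v < n) (h2 : n ≤ B (v+1)) : A n = v + 1 :=
  le_antisymm (A_le h2) (lt_A h1)

lemma A_eq2 {n u v : ℕ} (huv : v = u + 1) (h1 : B u < n) (h2 : n ≤ B v) : A n = v := by
  subst huv; exact A_eq h1 h2

lemma A_mono : Monotone A := by
  intro x y hxy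
  exact A_le (le_trans hxy (le_B_A y))

lemma B_zero : B 0 = 0 := by simp [B]
lemma B_one : B 1 = 1 := by have := B_rec 1; simpa [B_zero] using this
lemma B_two : B 2 = 3 := by have := B_rec 2; rw [B_one] at this; omega

lemma A_zero : A 0 = 0 := Nat.le_zero.mp (A_le (by simp [B_zero]))
lemma A_one : A 1 = 1 := A_eq (by simp [B_zero]) (by simp [B_one])
lemma A_two : A 2 = 2 := A_eq (by simp [B_one]) (by simp [B_two])

lemma A_B (v : ℕ) : A (B v) = v := by
  cases v with
  | zero => simpa [B_zero] using A_zero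
  | succ u => exact A_eq (B_lt_succ u) le_rfl

lemma B_odd (u : ℕ) : B (2*u+1) = 2*u+1 + B u := by
  have h := B_rec (2*u+1)
  have h2 : (2*u+1)/2 = u := by omega
  rwa [h2] at h

lemma B_even (u : ℕ) : B (2*u) = 2*u + B u := by
  have h := B_rec (2*u)
  have h2 : (2*u)/2 = u := by omega
  rwa [h2] at h

lemma one_le_A {n : ℕ} (h : 1 ≤ n) : 1 ≤ A n := by
  have h1 := A_one
  have h2 := A_mono h
  omega

lemma two_le_A {n : ℕ} (h : 2 ≤ n) : 2 ≤ A n := by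
  have h1 := A_two
  have h2 := A_mono h
  omega

lemma A_le_self (n : ℕ) : A n ≤ n := A_le (le_B_self n)

/-- The meta-Fibonacci identity for the closed form `A`. -/
lemma key (k : ℕ) (hk : 2 ≤ k) : A k = A (k - A (k-1)) + A (k - 1 - A (k-2)) := by
  have hv2 : 2 ≤ A k := two_le_A hk
  obtain ⟨m, hv⟩ : ∃ m, A k = m + 2 := ⟨A k - 2, by omega⟩
  have hk2 : k ≤ B (A k) := le_B_A k
  rw [hv] at hk2
  have hk1 : B (m+1) < k := by
    by_contra h
    push_neg at h
    have := A_le h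
    omega
  rcases Nat.even_or_odd m with ⟨u, hu⟩ | ⟨u, hu⟩
  · -- A k = 2u+2
    have e0 := B_lt_succ u
    have e1 : B (2*u+1) = 2*u+1 + B u := B_odd u
    have e3 : B (2*u) = 2*u + B u := B_even u
    have e2 : B (2*u+2) = 2*u+2 + B (u+1) := by
      have h := B_even (u+1)
      rw [show 2*(u+1) = 2*u+2 by ring] at h
      omega
    have hm1 : m + 1 = 2*u + 1 := by omega
    have hm2 : m + 2 = 2*u + 2 := by omega
    rw [hm1] at hk1
    rw [hm2] at hk2
    have hcases : k = B (2*u+1) + 1 ∨ k = B (2*u+1) + 2 ∨ B (2*u+1) + 3 ≤ k := by omega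
    have hABu1 : A (B u + 1) = u + 1 := A_eq2 rfl (by omega) (by omega)
    rcases hcases with hc | hc | hc
    · -- k = B(2u+1)+1
      have hA1 : A (k-1) = 2*u+1 := by
        rw [show k - 1 = B (2*u+1) by omega, A_B]
      have hA2 : A (k-2) = 2*u := by
        rw [show k - 2 = B (2*u) by omega, A_B]
      have T1 : A (k - A (k-1)) = u + 1 := by
        rw [hA1, show k - (2*u+1) = B u + 1 by omega]; exact hABu1
      have T2 : A (k - 1 - A (k-2)) = u + 1 := by
        rw [hA2, show k - 1 - (2*u) = B u + 1 by omega]; exact hABu1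
      omega
    · -- k = B(2u+1)+2
      have hA1 : A (k-1) = 2*u+2 := A_eq2 (by omega) (u := 2*u+1) (by omega) (by omega)
      have hA2 : A (k-2) = 2*u+1 := by
        rw [show k - 2 = B (2*u+1) by omega, A_B]
      have T1 : A (k - A (k-1)) = u + 1 := by
        rw [hA1, show k - (2*u+2) = B u + 1 by omega]; exact hABu1
      have T2 : A (k - 1 - A (k-2)) = u + 1 := by
        rw [hA2, show k - 1 - (2*u+1) = B u + 1 by omega]; exact hABu1
      omega
    · -- B(2u+1)+3 ≤ k ≤ B(2u+2)
      have hA1 : A (k-1) = 2*u+2 := A_eq2 (by omega) (u := 2*u+1) (by omega) (by omega)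
      have hA2 : A (k-2) = 2*u+2 := A_eq2 (by omega) (u := 2*u+1) (by omega) (by omega)
      have T1 : A (k - A (k-1)) = u + 1 := by
        rw [hA1]; exact A_eq2 rfl (by omega) (by omega)
      have T2 : A (k - 1 - A (k-2)) = u + 1 := by
        rw [hA2]; exact A_eq2 rfl (by omega) (by omega)
      omega
  · -- A k = 2u+3
    have e0 := B_lt_succ u
    have e1 : B (2*u+1) = 2*u+1 + B u := B_odd u
    have e2 : B (2*u+2) = 2*u+2 + B (u+1) := by
      have h := B_even (u+1)
      rw [show 2*(u+1) = 2*u+2 by ring] at h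
      omega
    have e3 : B (2*u+3) = 2*u+3 + B (u+1) := by
      have h := B_odd (u+1)
      rw [show 2*(u+1)+1 = 2*u+3 by ring] at h
      omega
    have hm1 : m + 1 = 2*u + 2 := by omega
    have hm2 : m + 2 = 2*u + 3 := by omega
    rw [hm1] at hk1
    rw [hm2] at hk2
    -- so k = B(2u+2)+1
    have hA1 : A (k-1) = 2*u+2 := by
      rw [show k - 1 = B (2*u+2) by omega, A_B]
    have hA2 : A (k-2) = 2*u+2 := A_eq2 (by omega) (u := 2*u+1) (by omega) (by omega)
    have T1 : A (k - A (k-1)) = u + 2 := by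
      rw [hA1, show k - (2*u+2) = B (u+1) + 1 by omega]
      refine A_eq2 rfl (by omega) ?_
      show B (u+1) + 1 ≤ B (u+1+1)
      exact B_lt_succ (u+1)
    have T2 : A (k - 1 - A (k-2)) = u + 1 := by
      rw [hA2, show k - 1 - (2*u+2) = B (u+1) by omega, A_B]
    omega

/-- Characterization of `minIdx` assuming `f = 2A` below `k`. -/
lemma minIdx_eq (f : ℕ → ℕ) (k : ℕ) (hk : 2 ≤ k)
    (hf : ∀ j, j < k → f j = 2 * A j) : minIdx f k = k + 1 - A k := by
  have hv2 : 2 ≤ A k := two_le_A hk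
  have hvk : A k ≤ k := A_le_self k
  have hk2 : k ≤ B (A k) := le_B_A k
  have hk1 : B (A k - 1) < k := by
    by_contra h
    push_neg at h
    have := A_le h
    omega
  set v := A k with hv
  -- upper bound fact: A (k - v) ≤ v/2
  have hup : A (k - v) ≤ v / 2 := by
    apply A_le
    have h := B_rec v
    have h2 : B (v/2) = B (v/2) := rfl
    omega
  -- lower bound fact: v ≤ 2 * A (k+1-v)
  have hlow : v ≤ 2 * A (k + 1 - v) := by
    have h := B_rec (v-1)
    have hgt : B ((v-1)/2) < k + 1 - v := by omega
    have := lt_A hgt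
    omega
  have hmem : (k + 1 - v) ∈ {i : ℕ | 1 ≤ i ∧ i ≤ k - 1 ∧ k - i + 1 ≤ f i} := by
    refine ⟨by omega, by omega, ?_⟩
    rw [hf _ (by omega)]
    omega
  have hno : ∀ j, 1 ≤ j → j < k + 1 - v → ¬ (k - j + 1 ≤ f j) := by
    intro j h1 h2 hcon
    rw [hf _ (by omega)] at hcon
    have hj : A j ≤ A (k - v) := A_mono (by omega)
    omega
  unfold minIdx
  apply le_antisymm (Nat.sInf_le hmem)
  by_contra h
  push_neg at h
  have hmemInf := Nat.sInf_mem (⟨_, hmem⟩ : Set.Nonempty {i : ℕ | 1 ≤ i ∧ i ≤ k - 1 ∧ k - i + 1 ≤ f i})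
  obtain ⟨g1, g2, g3⟩ := hmemInf
  exact hno _ g1 (by omega) g3

end Stmt3Aux

theorem stmt_3 (f : ℕ → ℕ) (hf0 : f 0 = 0) (hf1 : f 1 = 2)
    (hfrec : ∀ k, 2 ≤ k → f k = 2 * (k - minIdx f k + 1))
    (a : ℕ → ℕ) (ha0 : a 0 = 0) (ha1 : a 1 = 1)
    (harec : ∀ k, 2 ≤ k → a k = a (k - a (k - 1)) + a (k - 1 - a (k - 2))) :
    ∀ k, f k = 2 * a k := by
  open Stmt3Aux in
  have H : ∀ k, f k = 2 * A k ∧ a k = A k := by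
    intro k
    induction k using Nat.strong_induction_on with
    | _ k ih =>
      match k, ih with
      | 0, _ => exact ⟨by rw [hf0, A_zero], by rw [ha0, A_zero]⟩
      | 1, _ => exact ⟨by rw [hf1, A_one], by rw [ha1, A_one]⟩
      | (n+2), ih =>
        set k := n + 2 with hkdef
        have hk : 2 ≤ k := by omega
        constructor
        · rw [hfrec k hk, minIdx_eq f k hk (fun j hj => (ih j hj).1)]
          have h1 : 2 ≤ A k := two_le_A hk
          have h2 : A k ≤ k := A_le_self k
          have h3 : k - (k + 1 - A k) + 1 = A k := by omega
          rw [h3]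
        · have ha1' : a (k-1) = A (k-1) := (ih (k-1) (by omega)).2
          have ha2' : a (k-2) = A (k-2) := (ih (k-2) (by omega)).2
          have hA1pos : 1 ≤ A (k-1) := one_le_A (by omega)
          rw [harec k hk, ha1', ha2']
          have t1 : a (k - A (k-1)) = A (k - A (k-1)) := (ih _ (by omega)).2
          have t2 : a (k - 1 - A (k-2)) = A (k - 1 - A (k-2)) := (ih _ (by omega)).2
          rw [t1, t2, ← key k hk]
  intro k
  rw [(H k).1, (H k).2]
end

section
/- Let f : ℕ → ℕ satisfy f(0) = 0, f(1) = 2, and for every k ≥ 2, f(k) = 2·(k − i + 1) where i is the least element of {1, …, k−1} with k − i + 1 ≤ f(i), and define i_f(k) := k + 1 − f(k)/2. Then for every k ∈ ℕ, i_f(k) is the least i ∈ ℕ with i + f(i) ≥ k + 1. -/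
theorem stmt_4 (f : ℕ → ℕ) (h0 : f 0 = 0) (h1 : f 1 = 2)
    (hrec : ∀ k, 2 ≤ k → f k = 2 * (k - minIdx f k + 1)) :
    ∀ k, IsLeast {i : ℕ | k + 1 ≤ i + f i} (iF f k) := by
  have ftwo : ∀ j, 1 ≤ j → 2 ≤ f j := by
    intro j hj
    rcases Nat.lt_or_ge j 2 with h | h
    · have : j = 1 := by omega
      rw [this, h1]
    · rw [hrec j h]; omega
  intro k
  rcases Nat.lt_or_ge k 2 with hk | hk
  · have hiF : iF f k = 1 := by
      interval_cases k <;> simp [iF, h0, h1]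
    rw [hiF]
    constructor
    · show k + 1 ≤ 1 + f 1
      omega
    · intro i hi
      simp only [Set.mem_setOf_eq] at hi
      rcases Nat.eq_zero_or_pos i with rfl | h
      · rw [h0] at hi; omega
      · exact h
  · have hne : {i : ℕ | 1 ≤ i ∧ i ≤ k - 1 ∧ k - i + 1 ≤ f i}.Nonempty := by
      refine ⟨k - 1, by omega, le_refl _, ?_⟩
      have := ftwo (k - 1) (by omega)
      omega
    have hmem : minIdx f k ∈ {i : ℕ | 1 ≤ i ∧ i ≤ k - 1 ∧ k - i + 1 ≤ f i} := by
      rw [minIdx]; exact Nat.sInf_mem hne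
    obtain ⟨hm1, hmk, hmf⟩ := hmem
    have hfk := hrec k hk
    have hiF : iF f k = minIdx f k := by
      simp only [iF, hfk]
      omega
    rw [hiF]
    constructor
    · show k + 1 ≤ minIdx f k + f (minIdx f k)
      omega
    · intro i hi
      simp only [Set.mem_setOf_eq] at hi
      by_contra hlt
      push_neg at hlt
      rcases Nat.eq_zero_or_pos i with rfl | hi1
      · rw [h0] at hi; omega
      · have hiS : i ∈ {i : ℕ | 1 ≤ i ∧ i ≤ k - 1 ∧ k - i + 1 ≤ f i} :=
          ⟨hi1, by omega, by omega⟩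
        have := Nat.sInf_le hiS
        rw [← minIdx] at this
        omega
end

section
/- Let f : ℕ → ℕ satisfy f(0) = 0, f(1) = 2, and for every k ≥ 2, f(k) = 2·(k − i + 1) where i is the least element of {1, …, k−1} with k − i + 1 ≤ f(i), and define i_f(k) := k + 1 − f(k)/2. Then for every k ∈ ℕ one has f(k+1) − f(k) ∈ {0, 2} and i_f(k+1) − i_f(k) ∈ {0, 1}. -/
lemma stmt_5_key (f : ℕ → ℕ) (h0 : f 0 = 0) (h1 : f 1 = 2)
    (hrec : ∀ k, 2 ≤ k → f k = 2 * (k - minIdx f k + 1)) :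
    ∀ k, (f (k + 1) = f k ∨ f (k + 1) = f k + 2) ∧ f k ≤ 2 * k := by
  intro k
  induction k using Nat.strong_induction_on with
  | _ k IH =>
  have step : ∀ j, j < k → f j ≤ f (j + 1) := by
    intro j hj
    rcases (IH j hj).1 with h | h <;> omega
  have mono : ∀ b, b ≤ k → ∀ a, a ≤ b → f a ≤ f b := by
    intro b
    induction b with
    | zero => intro _ a ha; obtain rfl : a = 0 := Nat.le_zero.mp ha; exact le_rfl
    | succ n ihn =>
      intro hbk a ha
      rcases Nat.lt_succ_iff_lt_or_eq.mp (Nat.lt_succ_of_le ha) with h | h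
      · exact le_trans (ihn (by omega) a (by omega)) (step n (by omega))
      · exact le_of_eq (by rw [h])
  have flow : ∀ j, 1 ≤ j → j ≤ k → 2 ≤ f j := by
    intro j hj1 hjk
    have := mono j hjk 1 hj1
    omega
  match k with
  | 0 =>
    refine ⟨?_, by omega⟩
    show f 1 = f 0 ∨ f 1 = f 0 + 2
    omega
  | 1 =>
    have hmem : (1 : ℕ) ∈ {i : ℕ | 1 ≤ i ∧ i ≤ 2 - 1 ∧ 2 - i + 1 ≤ f i} := by
      simp [h1]
    have h2 : minIdx f 2 ≤ 1 := Nat.sInf_le hmem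
    have h3 : minIdx f 2 ∈ {i : ℕ | 1 ≤ i ∧ i ≤ 2 - 1 ∧ 2 - i + 1 ≤ f i} :=
      Nat.sInf_mem ⟨1, hmem⟩
    have h4 : 1 ≤ minIdx f 2 := h3.1
    have h5 : minIdx f 2 = 1 := le_antisymm h2 h4
    have h6 := hrec 2 (by norm_num)
    rw [h5] at h6
    refine ⟨?_, by omega⟩
    show f 2 = f 1 ∨ f 2 = f 1 + 2
    omega
  | (m + 2) =>
    set k := m + 2 with hk
    have hk2 : 2 ≤ k := by omega
    -- S_k is nonempty: k - 1 belongs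
    have hSk : (k - 1) ∈ {i : ℕ | 1 ≤ i ∧ i ≤ k - 1 ∧ k - i + 1 ≤ f i} := by
      refine ⟨by omega, le_refl _, ?_⟩
      have := flow (k - 1) (by omega) (by omega)
      omega
    set i := minIdx f k with hi_def
    have hi : i ∈ {i : ℕ | 1 ≤ i ∧ i ≤ k - 1 ∧ k - i + 1 ≤ f i} :=
      Nat.sInf_mem ⟨k - 1, hSk⟩
    obtain ⟨hi1, hik, hif⟩ := hi
    have hfk : f k = 2 * (k - i + 1) := hrec k hk2
    -- i + 1 is in S_{k+1}
    have hmem1 : (i + 1) ∈ {x : ℕ | 1 ≤ x ∧ x ≤ (k + 1) - 1 ∧ (k + 1) - x + 1 ≤ f x} := by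
      refine ⟨by omega, by omega, ?_⟩
      have hst : f i ≤ f (i + 1) := step i (by omega)
      have : (k + 1) - (i + 1) + 1 = k - i + 1 := by omega
      omega
    set j := minIdx f (k + 1) with hj_def
    have hjle : j ≤ i + 1 := Nat.sInf_le hmem1
    have hj : j ∈ {x : ℕ | 1 ≤ x ∧ x ≤ (k + 1) - 1 ∧ (k + 1) - x + 1 ≤ f x} :=
      Nat.sInf_mem ⟨i + 1, hmem1⟩
    obtain ⟨hj1, hjk, hjf⟩ := hj
    have hij : i ≤ j := by
      by_cases hcase : j ≤ k - 1
      · have hjmemk : j ∈ {x : ℕ | 1 ≤ x ∧ x ≤ k - 1 ∧ k - x + 1 ≤ f x} :=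
          ⟨hj1, hcase, by omega⟩
        exact Nat.sInf_le hjmemk
      · omega
    have hfk1 : f (k + 1) = 2 * ((k + 1) - j + 1) := hrec (k + 1) (by omega)
    constructor <;> omega

theorem stmt_5 (f : ℕ → ℕ) (h0 : f 0 = 0) (h1 : f 1 = 2)
    (hrec : ∀ k, 2 ≤ k → f k = 2 * (k - minIdx f k + 1)) :
    ∀ k, (f (k + 1) = f k ∨ f (k + 1) = f k + 2) ∧
      (iF f (k + 1) = iF f k ∨ iF f (k + 1) = iF f k + 1) := by
  intro k
  obtain ⟨hstep, hbd⟩ := stmt_5_key f h0 h1 hrec k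
  refine ⟨hstep, ?_⟩
  simp only [iF]
  omega
end

section
/- Let f : ℕ → ℕ satisfy f(0) = 0, f(1) = 2, and for every k ≥ 2, f(k) = 2·(k − i + 1) where i is the least element of {1, …, k−1} with k − i + 1 ≤ f(i), define i_f(k) := k + 1 − f(k)/2 and the slack σ_f(k) := i_f(k) + f(i_f(k)) − (k+1) (a natural number). Then for every k ∈ ℕ the following are equivalent: (i) i_f(k+1) = i_f(k) + 1; (ii) σ_f(k) = 0; (iii) f(k+1) = f(k). Consequently f(k+1) − f(k) = 2·min(σ_f(k), 1). -/
/-- The slack `σ_f(k) := i_f(k) + f(i_f(k)) - (k+1)`. -/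
def slack (f : ℕ → ℕ) (k : ℕ) : ℕ := iF f k + f (iF f k) - (k + 1)

private lemma spec_mem (f : ℕ → ℕ) (k : ℕ) (hk : 2 ≤ k) (h2 : 2 ≤ f (k - 1)) :
    1 ≤ minIdx f k ∧ minIdx f k ≤ k - 1 ∧ k + 1 ≤ minIdx f k + f (minIdx f k) := by
  have hne : (k - 1) ∈ {i : ℕ | 1 ≤ i ∧ i ≤ k - 1 ∧ k - i + 1 ≤ f i} :=
    ⟨by omega, le_refl _, by omega⟩
  have hmem : minIdx f k ∈ {i : ℕ | 1 ≤ i ∧ i ≤ k - 1 ∧ k - i + 1 ≤ f i} :=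
    Nat.sInf_mem ⟨_, hne⟩
  obtain ⟨a, b, c⟩ := hmem
  exact ⟨a, b, by omega⟩

private lemma spec_min (f : ℕ → ℕ) (k j : ℕ) (hj1 : 1 ≤ j) (hj2 : j ≤ k - 1)
    (hjlt : j < minIdx f k) : f j + j ≤ k := by
  by_contra h
  have hmem : j ∈ {i : ℕ | 1 ≤ i ∧ i ≤ k - 1 ∧ k - i + 1 ≤ f i} := ⟨hj1, hj2, by omega⟩
  have hle : minIdx f k ≤ j := Nat.sInf_le hmem
  omega

private lemma mono2 (f : ℕ → ℕ) (h0 : f 0 = 0) (h1 : f 1 = 2)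
    (hrec : ∀ k, 2 ≤ k → f k = 2 * (k - minIdx f k + 1)) :
    ∀ k, 2 ≤ f (k + 1) ∧ f (k + 1) ≤ f (k + 2) ∧ f (k + 2) ≤ f (k + 1) + 2 := by
  intro k
  induction k using Nat.strong_induction_on with
  | _ k IH =>
  have h2all : ∀ m, m ≤ k → 2 ≤ f (m + 1) := by
    intro m hm
    rcases Nat.eq_zero_or_pos m with rfl | hp
    · simpa using h1.ge
    · obtain ⟨a, b, _⟩ := IH (m - 1) (by omega)
      rw [show m - 1 + 1 = m by omega] at a b
      rw [show m - 1 + 2 = m + 1 by omega] at b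
      omega
  have hmono : ∀ m, 1 ≤ m → m ≤ k → f m ≤ f (m + 1) := by
    intro m h1' h2'
    obtain ⟨_, b, _⟩ := IH (m - 1) (by omega)
    rw [show m - 1 + 1 = m by omega, show m - 1 + 2 = m + 1 by omega] at b
    exact b
  rcases Nat.eq_zero_or_pos k with rfl | hk
  · obtain ⟨a, b, c⟩ := spec_mem f 2 (by norm_num) (by norm_num [h1])
    have hi : minIdx f 2 = 1 := by omega
    have hf2 := hrec 2 (by norm_num)
    rw [hi] at hf2
    norm_num at hf2 ⊢
    omega
  · have hfk2 : 2 ≤ f k := by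
      have := h2all (k - 1) (by omega)
      rwa [show k - 1 + 1 = k by omega] at this
    obtain ⟨hi'1, hi'2, hi'3⟩ := spec_mem f (k + 1) (by omega)
      (by rwa [show k + 1 - 1 = k by omega])
    have hfk1 : f (k + 1) = 2 * (k + 1 - minIdx f (k + 1) + 1) := hrec (k + 1) (by omega)
    have hfk1' : 2 ≤ f (k + 1) := h2all k le_rfl
    obtain ⟨hi1, hi2, hi3⟩ := spec_mem f (k + 2) (by omega)
      (by rwa [show k + 2 - 1 = k + 1 by omega])
    have hfk2e : f (k + 2) = 2 * (k + 2 - minIdx f (k + 2) + 1) := hrec (k + 2) (by omega)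
    have hge : minIdx f (k + 1) ≤ minIdx f (k + 2) := by
      by_contra hcon
      push_neg at hcon
      have := spec_min f (k + 1) (minIdx f (k + 2)) (by omega) (by omega) hcon
      omega
    rcases Nat.lt_or_ge (k + 2) (minIdx f (k + 1) + f (minIdx f (k + 1))) with hbig | hsmall
    · have hmem : minIdx f (k + 1) ∈
          {j : ℕ | 1 ≤ j ∧ j ≤ (k + 2) - 1 ∧ (k + 2) - j + 1 ≤ f j} :=
        ⟨hi'1, by omega, by omega⟩
      have hle : minIdx f (k + 2) ≤ minIdx f (k + 1) := Nat.sInf_le hmem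
      have hii : minIdx f (k + 2) = minIdx f (k + 1) := by omega
      rw [hii] at hfk2e
      omega
    · have heq : minIdx f (k + 1) + f (minIdx f (k + 1)) = k + 2 := by omega
      have hmono' : f (minIdx f (k + 1)) ≤ f (minIdx f (k + 1) + 1) :=
        hmono (minIdx f (k + 1)) hi'1 (by omega)
      have hmem : minIdx f (k + 1) + 1 ∈
          {j : ℕ | 1 ≤ j ∧ j ≤ (k + 2) - 1 ∧ (k + 2) - j + 1 ≤ f j} :=
        ⟨by omega, by omega, by omega⟩
      have hle : minIdx f (k + 2) ≤ minIdx f (k + 1) + 1 := Nat.sInf_le hmem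
      have hne : minIdx f (k + 2) ≠ minIdx f (k + 1) := by
        intro h
        rw [h] at hi3
        omega
      have hii : minIdx f (k + 2) = minIdx f (k + 1) + 1 := by omega
      rw [hii] at hfk2e
      omega

theorem stmt_6 (f : ℕ → ℕ) (h0 : f 0 = 0) (h1 : f 1 = 2)
    (hrec : ∀ k, 2 ≤ k → f k = 2 * (k - minIdx f k + 1)) :
    ∀ k, (iF f (k + 1) = iF f k + 1 ↔ slack f k = 0) ∧
      (slack f k = 0 ↔ f (k + 1) = f k) ∧
      f (k + 1) = f k + 2 * min (slack f k) 1 := by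
  intro k
  have hmono : ∀ m, 1 ≤ m → f m ≤ f (m + 1) := by
    intro m hm
    obtain ⟨_, b, _⟩ := mono2 f h0 h1 hrec (m - 1)
    rwa [show m - 1 + 1 = m by omega, show m - 1 + 2 = m + 1 by omega] at b
  have h2f : ∀ m, 1 ≤ m → 2 ≤ f m := by
    intro m hm
    obtain ⟨a, _, _⟩ := mono2 f h0 h1 hrec (m - 1)
    rwa [show m - 1 + 1 = m by omega] at a
  rcases Nat.lt_or_ge k 2 with hk | hk
  · interval_cases k
    · simp only [iF, slack, h0, h1]
      norm_num
    · obtain ⟨a, b, c⟩ := spec_mem f 2 (by norm_num) (by norm_num [h1])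
      have hi : minIdx f 2 = 1 := by omega
      have hf2 := hrec 2 (by norm_num)
      rw [hi] at hf2
      norm_num at hf2
      simp only [iF, slack, h1, hf2]
      norm_num [h1]
  · obtain ⟨hi'1, hi'2, hi'3⟩ := spec_mem f k hk (h2f (k - 1) (by omega))
    have hfk : f k = 2 * (k - minIdx f k + 1) := hrec k hk
    obtain ⟨hi1, hi2, hi3⟩ := spec_mem f (k + 1) (by omega)
      (by rw [show k + 1 - 1 = k by omega]; exact h2f k (by omega))
    have hfk1 : f (k + 1) = 2 * (k + 1 - minIdx f (k + 1) + 1) := hrec (k + 1) (by omega)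
    have hdiv : f k / 2 = k - minIdx f k + 1 := by rw [hfk]; omega
    have hdiv1 : f (k + 1) / 2 = k + 1 - minIdx f (k + 1) + 1 := by rw [hfk1]; omega
    have hiFk : iF f k = minIdx f k := by simp only [iF]; omega
    have hiFk1 : iF f (k + 1) = minIdx f (k + 1) := by simp only [iF]; omega
    have hslack : slack f k = minIdx f k + f (minIdx f k) - (k + 1) := by
      rw [slack, hiFk]
    have hge : minIdx f k ≤ minIdx f (k + 1) := by
      by_contra hcon
      push_neg at hcon
      have := spec_min f k (minIdx f (k + 1)) (by omega) (by omega) hcon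
      omega
    rcases Nat.lt_or_ge (k + 1) (minIdx f k + f (minIdx f k)) with hbig | hsmall
    · have hmem : minIdx f k ∈
          {j : ℕ | 1 ≤ j ∧ j ≤ (k + 1) - 1 ∧ (k + 1) - j + 1 ≤ f j} :=
        ⟨hi'1, by omega, by omega⟩
      have hle : minIdx f (k + 1) ≤ minIdx f k := Nat.sInf_le hmem
      have hii : minIdx f (k + 1) = minIdx f k := by omega
      rw [hii] at hfk1 hiFk1
      rw [hslack, hiFk, hiFk1]
      omega
    · have heq : minIdx f k + f (minIdx f k) = k + 1 := by omega
      have hmono' : f (minIdx f k) ≤ f (minIdx f k + 1) := hmono (minIdx f k) hi'1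
      have hmem : minIdx f k + 1 ∈
          {j : ℕ | 1 ≤ j ∧ j ≤ (k + 1) - 1 ∧ (k + 1) - j + 1 ≤ f j} :=
        ⟨by omega, by omega, by omega⟩
      have hle : minIdx f (k + 1) ≤ minIdx f k + 1 := Nat.sInf_le hmem
      have hne : minIdx f (k + 1) ≠ minIdx f k := by
        intro h
        rw [h] at hi3
        omega
      have hii : minIdx f (k + 1) = minIdx f k + 1 := by omega
      rw [hii] at hfk1 hiFk1
      rw [hslack, hiFk, hiFk1]
      omega
end

section
/- Let f : ℕ → ℕ satisfy f(0) = 0, f(1) = 2, and for every k ≥ 2, f(k) = 2·(k − i + 1) where i is the least element of {1, …, k−1} with k − i + 1 ≤ f(i), define i_f(k) := k + 1 − f(k)/2 and the slack σ_f(k) := i_f(k) + f(i_f(k)) − (k+1). Then for every k ∈ ℕ: if σ_f(k) > 0 then σ_f(k+1) = σ_f(k) − 1, and if σ_f(k) = 0 then σ_f(k+1) ∈ {0, 2}. -/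
section Aux

variable {f : ℕ → ℕ}

lemma f_two_le (h1 : f 1 = 2)
    (hrec : ∀ k, 2 ≤ k → f k = 2 * (k - minIdx f k + 1)) :
    ∀ j, 1 ≤ j → 2 ≤ f j := by
  intro j hj
  rcases Nat.lt_or_ge j 2 with h | h
  · interval_cases j; omega
  · rw [hrec j h]; omega

lemma minIdx_mem (h1 : f 1 = 2)
    (hrec : ∀ k, 2 ≤ k → f k = 2 * (k - minIdx f k + 1)) {k : ℕ} (hk : 2 ≤ k) :
    1 ≤ minIdx f k ∧ minIdx f k ≤ k - 1 ∧ k - minIdx f k + 1 ≤ f (minIdx f k) := by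
  have hmem : (k - 1) ∈ {i : ℕ | 1 ≤ i ∧ i ≤ k - 1 ∧ k - i + 1 ≤ f i} := by
    refine ⟨by omega, le_refl _, ?_⟩
    have := f_two_le h1 hrec (k - 1) (by omega)
    omega
  exact Nat.sInf_mem ⟨_, hmem⟩

lemma iF_eq (h1 : f 1 = 2)
    (hrec : ∀ k, 2 ≤ k → f k = 2 * (k - minIdx f k + 1)) {k : ℕ} (hk : 2 ≤ k) :
    iF f k = minIdx f k := by
  obtain ⟨a, b, c⟩ := minIdx_mem h1 hrec hk
  have := hrec k hk
  unfold iF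
  omega

lemma case1 (h1 : f 1 = 2)
    (hrec : ∀ k, 2 ≤ k → f k = 2 * (k - minIdx f k + 1)) {k : ℕ} (hk : 2 ≤ k)
    (h : k + 2 ≤ minIdx f k + f (minIdx f k)) :
    minIdx f (k + 1) = minIdx f k := by
  obtain ⟨hm1, hm2, hm3⟩ := minIdx_mem h1 hrec hk
  have hmem : minIdx f k ∈ {i : ℕ | 1 ≤ i ∧ i ≤ (k + 1) - 1 ∧ (k + 1) - i + 1 ≤ f i} :=
    ⟨hm1, by omega, by omega⟩
  have hle : minIdx f (k + 1) ≤ minIdx f k := Nat.sInf_le hmem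
  have hmemInf : 1 ≤ minIdx f (k + 1) ∧ minIdx f (k + 1) ≤ (k + 1) - 1 ∧
      (k + 1) - minIdx f (k + 1) + 1 ≤ f (minIdx f (k + 1)) := Nat.sInf_mem ⟨_, hmem⟩
  by_contra hne
  have hlt : minIdx f (k + 1) < minIdx f k := lt_of_le_of_ne hle hne
  obtain ⟨a, b, c⟩ := hmemInf
  have hin : minIdx f (k + 1) ∈ {i : ℕ | 1 ≤ i ∧ i ≤ k - 1 ∧ k - i + 1 ≤ f i} :=
    ⟨a, by omega, by omega⟩
  have hle2 : minIdx f k ≤ minIdx f (k + 1) := Nat.sInf_le hin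
  omega

lemma case2 (h1 : f 1 = 2)
    (hrec : ∀ k, 2 ≤ k → f k = 2 * (k - minIdx f k + 1)) {k : ℕ} (hk : 2 ≤ k)
    (hmono : f (minIdx f k) ≤ f (minIdx f k + 1))
    (h : minIdx f k + f (minIdx f k) = k + 1) :
    minIdx f (k + 1) = minIdx f k + 1 := by
  obtain ⟨hm1, hm2, hm3⟩ := minIdx_mem h1 hrec hk
  have hmem : minIdx f k + 1 ∈ {i : ℕ | 1 ≤ i ∧ i ≤ (k + 1) - 1 ∧ (k + 1) - i + 1 ≤ f i} :=
    ⟨by omega, by omega, by omega⟩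
  have hle : minIdx f (k + 1) ≤ minIdx f k + 1 := Nat.sInf_le hmem
  have hmemInf : 1 ≤ minIdx f (k + 1) ∧ minIdx f (k + 1) ≤ (k + 1) - 1 ∧
      (k + 1) - minIdx f (k + 1) + 1 ≤ f (minIdx f (k + 1)) := Nat.sInf_mem ⟨_, hmem⟩
  by_contra hne
  have hlt : minIdx f (k + 1) < minIdx f k + 1 := lt_of_le_of_ne hle hne
  obtain ⟨a, b, c⟩ := hmemInf
  rcases Nat.lt_or_ge (minIdx f (k + 1)) (minIdx f k) with hc | hc
  · have hin : minIdx f (k + 1) ∈ {i : ℕ | 1 ≤ i ∧ i ≤ k - 1 ∧ k - i + 1 ≤ f i} :=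
      ⟨a, by omega, by omega⟩
    have hle2 : minIdx f k ≤ minIdx f (k + 1) := Nat.sInf_le hin
    omega
  · have heq : minIdx f (k + 1) = minIdx f k := by omega
    rw [heq] at c
    omega

lemma f_two (h1 : f 1 = 2)
    (hrec : ∀ k, 2 ≤ k → f k = 2 * (k - minIdx f k + 1)) : f 2 = 4 := by
  obtain ⟨a, b, c⟩ := minIdx_mem h1 hrec (le_refl 2)
  have hm : minIdx f 2 = 1 := by omega
  have := hrec 2 (le_refl 2)
  rw [hm] at this
  omega

lemma f_dich (h0 : f 0 = 0) (h1 : f 1 = 2)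
    (hrec : ∀ k, 2 ≤ k → f k = 2 * (k - minIdx f k + 1)) :
    ∀ k, f (k + 1) = f k ∨ f (k + 1) = f k + 2 := by
  intro k
  induction k using Nat.strong_induction_on with
  | _ k ih =>
    match k, ih with
    | 0, _ => right; rw [h1, h0]
    | 1, _ => right; rw [f_two h1 hrec, h1]
    | (n + 2), ih =>
      set K := n + 2 with hK
      have hk : 2 ≤ K := by omega
      obtain ⟨hm1, hm2, hm3⟩ := minIdx_mem h1 hrec hk
      have hfK := hrec K hk
      have hfK1 := hrec (K + 1) (by omega)
      rcases Nat.lt_or_ge (minIdx f K + f (minIdx f K)) (K + 2) with hc | hc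
      · -- slack zero case
        have heq : minIdx f K + f (minIdx f K) = K + 1 := by omega
        have hmono : f (minIdx f K) ≤ f (minIdx f K + 1) := by
          rcases ih (minIdx f K) (by omega) with h | h <;> omega
        have e2 := case2 h1 hrec hk hmono heq
        rw [e2] at hfK1
        left
        omega
      · have e1 := case1 h1 hrec hk hc
        rw [e1] at hfK1
        right
        omega

end Aux

theorem stmt_7 (f : ℕ → ℕ) (h0 : f 0 = 0) (h1 : f 1 = 2)
    (hrec : ∀ k, 2 ≤ k → f k = 2 * (k - minIdx f k + 1)) :
    ∀ k, (0 < slack f k → slack f (k + 1) = slack f k - 1) ∧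
      (slack f k = 0 → slack f (k + 1) = 0 ∨ slack f (k + 1) = 2) := by
  have hdich := f_dich h0 h1 hrec
  have hf2 := f_two h1 hrec
  intro k
  match k with
  | 0 =>
    have hs0 : slack f 0 = 2 := by simp [slack, iF, h0, h1]
    have hs1 : slack f 1 = 1 := by simp [slack, iF, h1]
    constructor
    · intro _; show slack f 1 = slack f 0 - 1; omega
    · intro h; omega
  | 1 =>
    have hs1 : slack f 1 = 1 := by simp [slack, iF, h1]
    have hiF2 : iF f 2 = 1 := by simp [iF, hf2]
    have hs2 : slack f 2 = 0 := by rw [slack, hiF2, h1]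
    constructor
    · intro _; show slack f 2 = slack f 1 - 1; omega
    · intro h; omega
  | (n + 2) =>
    set K := n + 2 with hK
    have hk : 2 ≤ K := by omega
    obtain ⟨hm1, hm2, hm3⟩ := minIdx_mem h1 hrec hk
    have hiF : iF f K = minIdx f K := iF_eq h1 hrec hk
    have hsK : slack f K = minIdx f K + f (minIdx f K) - (K + 1) := by
      rw [slack, hiF]
    have hiF1 : iF f (K + 1) = minIdx f (K + 1) := iF_eq h1 hrec (by omega)
    have hsK1 : slack f (K + 1) = minIdx f (K + 1) + f (minIdx f (K + 1)) - (K + 2) := by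
      rw [slack, hiF1]
    rcases Nat.lt_or_ge (minIdx f K + f (minIdx f K)) (K + 2) with hc | hc
    · -- slack zero case
      have heq : minIdx f K + f (minIdx f K) = K + 1 := by omega
      have hmono : f (minIdx f K) ≤ f (minIdx f K + 1) := by
        rcases hdich (minIdx f K) with h | h <;> omega
      have e2 := case2 h1 hrec hk hmono heq
      rw [e2] at hsK1
      constructor
      · intro h; omega
      · intro _
        rcases hdich (minIdx f K) with h | h <;> omega
    · have e1 := case1 h1 hrec hk hc
      rw [e1] at hsK1
      constructor
      · intro _; omega
      · intro h; omega
end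

section
/- For every k ≥ 1 one has S₂(k) ≤ k + ⌊log₂(k + 1 + ⌊log₂(k+1)⌋)⌋ ≤ k + 1 + ⌊log₂(k)⌋. -/
/-!
By Legendre's formula the exponent of `2` in `n!` is `n - s₂(n)`, where `s₂` is the binary digit
sum, so it suffices to show `s₂(k + m) ≤ m` for `m = ⌊log₂(k + 1 + ⌊log₂(k+1)⌋)⌋`. A number `n`
with `n + 1 < 2^(m+1)` has at most `m + 1` binary digits and is not `2^(m+1) - 1`, so not all of
them are `1`; and `k + m + 1 < 2^(m+1)` is an elementary estimate on logarithms, as is the upper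
bound `m ≤ ⌊log₂ k⌋ + 1`.
-/

open Nat

theorem Nat.Prime.pow_dvd_factorial_of_mul_add_digits_sum_le {p k n : ℕ} (hp : p.Prime)
    (h : (p - 1) * k + (p.digits n).sum ≤ n) : p ^ k ∣ n ! := by
  have := Fact.mk hp
  have hlegendre := sub_one_mul_padicValNat_factorial (p := p) n
  have hk : k ≤ padicValNat p n ! :=
    le_of_mul_le_mul_left (by omega) (Nat.sub_pos_of_lt hp.one_lt)
  exact (pow_dvd_pow p hk).trans pow_padicValNat_dvd

theorem Nat.digits_sum_le_of_lt_pow {b n j : ℕ} (hb : 1 < b) (h : n < b ^ j) :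
    (b.digits n).sum ≤ (b - 1) * j := by
  have hlen : (b.digits n).length ≤ j := (digits_length_le_iff hb n).2 h
  calc (b.digits n).sum ≤ (b.digits n).length • (b - 1) :=
        List.sum_le_card_nsmul _ _ fun d hd => Nat.le_sub_one_of_lt (digits_lt_base hb hd)
    _ ≤ (b - 1) * j := by rw [smul_eq_mul, mul_comm]; exact Nat.mul_le_mul_left _ hlen

theorem Nat.digits_sum_lt_of_succ_lt_pow {b : ℕ} (hb : 1 < b) :
    ∀ {j n : ℕ}, n + 1 < b ^ j → (b.digits n).sum < (b - 1) * j
  | 0, n, h => by simp at h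
  | j + 1, 0, _ => by
    rw [digits_zero, List.sum_nil]
    exact Nat.mul_pos (by omega) j.succ_pos
  | j + 1, n + 1, h => by
    rw [digits_def' hb (by omega : 0 < n + 1), List.sum_cons]
    have hdiv := Nat.mod_add_div (n + 1) b
    have hmod := Nat.mod_lt (n + 1) (by omega : b > 0)
    rw [pow_succ'] at h
    rcases Nat.lt_or_ge ((n + 1) % b) (b - 1) with hlow | htop
    · have hquot : (n + 1) / b < b ^ j := (Nat.div_lt_iff_lt_mul (by omega)).2 (by linarith)
      have := digits_sum_le_of_lt_pow hb hquot
      rw [Nat.mul_succ]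
      omega
    · have hquot : (n + 1) / b + 1 < b ^ j := by
        refine Nat.lt_of_mul_lt_mul_left (a := b) ?_
        rw [Nat.mul_succ]
        omega
      have := digits_sum_lt_of_succ_lt_pow hb hquot
      rw [Nat.mul_succ]
      omega

theorem Nat.add_log_two_lt_two_pow_succ {n j : ℕ} (h : n ≤ 2 ^ j) :
    n + log 2 n < 2 ^ (j + 1) := by
  have hlog : log 2 n ≤ j := by
    simpa only [log_pow one_lt_two] using log_mono_right (b := 2) h
  have hj : j < 2 ^ j := Nat.lt_two_pow_self
  rw [pow_succ]
  omega

theorem Nat.log_two_add_log_two_le (n : ℕ) : log 2 (n + log 2 n) ≤ log 2 n + 1 :=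
  Nat.le_of_lt_succ <| log_lt_of_lt_pow' (by omega) <|
    add_log_two_lt_two_pow_succ (lt_pow_succ_log_self one_lt_two n).le

theorem Nat.log_two_succ_add_log_two_succ_le (n : ℕ) :
    log 2 (n + 1 + log 2 (n + 1)) ≤ log 2 n + 1 :=
  Nat.le_of_lt_succ <| log_lt_of_lt_pow' (by omega) <|
    add_log_two_lt_two_pow_succ (lt_pow_succ_log_self one_lt_two n)

theorem Nat.add_log_two_add_log_two_lt_two_pow (n : ℕ) :
    n + log 2 (n + log 2 n) < 2 ^ (log 2 (n + log 2 n) + 1) := by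
  have hmL := log_two_add_log_two_le n
  set L := log 2 n
  set m := log 2 (n + L)
  have hnm : n + L < 2 ^ (m + 1) := lt_pow_succ_log_self one_lt_two _
  have hLm : L ≤ m := log_mono_right (by omega)
  rcases (by omega : m = L ∨ m = L + 1) with hm | hm
  · rwa [hm] at hnm ⊢
  · have hn : n < 2 ^ (L + 1) := lt_pow_succ_log_self one_lt_two n
    have hL : L + 1 < 2 ^ (L + 1) := Nat.lt_two_pow_self
    rw [hm, pow_succ 2 (L + 1)]
    omega

theorem stmt_10 : ∀ k : ℕ, 1 ≤ k →
    S2 k ≤ k + Nat.log 2 (k + 1 + Nat.log 2 (k + 1)) ∧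
    k + Nat.log 2 (k + 1 + Nat.log 2 (k + 1)) ≤ k + 1 + Nat.log 2 k := by
  intro k _
  have hlt_pow := add_log_two_add_log_two_lt_two_pow (k + 1)
  have hlog_le := log_two_succ_add_log_two_succ_le k
  set m := log 2 (k + 1 + log 2 (k + 1))
  have hdigits : (digits 2 (k + m)).sum < m + 1 := by
    simpa using digits_sum_lt_of_succ_lt_pow one_lt_two (j := m + 1) (n := k + m) (by omega)
  have hdvd : 2 ^ k ∣ (k + m)! := prime_two.pow_dvd_factorial_of_mul_add_digits_sum_le (by omega)
  exact ⟨Nat.sInf_le hdvd, by omega⟩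
end

section
/- For every n ≥ 1, the number of indices k ≥ 1 with S₂(k) = n equals ord₂(n), the 2-adic valuation of n; that is, the sequence S₂(1), S₂(2), S₂(3), … is obtained from the sequence 1, 2, 3, … by repeating each n ∈ ℕ exactly ord₂(n) many times. -/
/-!
Since `2^k ∣ n!` iff `k ≤ ord₂(n!)` and `ord₂(n!)` is nondecreasing in `n`, we have `S₂(k) = n`
exactly when `ord₂((n-1)!) < k ≤ ord₂(n!)`. These `k` form an interval of length
`ord₂(n!) - ord₂((n-1)!) = ord₂(n)`.
-/

open Nat

lemma pow_dvd_factorial_iff_le_padicValNat {p : ℕ} [Fact p.Prime] (k n : ℕ) :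
    p ^ k ∣ n ! ↔ k ≤ padicValNat p n ! :=
  padicValNat_dvd_iff_le (factorial_ne_zero n)

lemma padicValNat_factorial_succ {p : ℕ} [Fact p.Prime] (m : ℕ) :
    padicValNat p (m + 1)! = padicValNat p (m + 1) + padicValNat p m ! := by
  rw [factorial_succ, padicValNat.mul (succ_ne_zero m) (factorial_ne_zero m)]

lemma S2_eq_succ_iff (k m : ℕ) :
    S2 k = m + 1 ↔ padicValNat 2 m ! < k ∧ k ≤ padicValNat 2 (m + 1)! := by
  have : Fact (Nat.Prime 2) := ⟨prime_two⟩
  have upward_closed : ∀ n₁ n₂ : ℕ, n₁ ≤ n₂ →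
      n₁ ∈ {n : ℕ | 2 ^ k ∣ n !} → n₂ ∈ {n : ℕ | 2 ^ k ∣ n !} :=
    fun _ _ hle hdvd => hdvd.trans (factorial_dvd_factorial hle)
  rw [S2, sInf_upward_closed_eq_succ_iff upward_closed, Set.mem_ofPred_eq, Set.mem_ofPred_eq,
    pow_dvd_factorial_iff_le_padicValNat, pow_dvd_factorial_iff_le_padicValNat, not_le, and_comm]

lemma setOf_S2_eq_succ (m : ℕ) :
    {k : ℕ | 1 ≤ k ∧ S2 k = m + 1} = Set.Ioc (padicValNat 2 m !) (padicValNat 2 (m + 1)!) := by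
  ext k
  simp only [Set.mem_ofPred_eq, Set.mem_Ioc, S2_eq_succ_iff]
  omega

theorem stmt_11 : ∀ n : ℕ, 1 ≤ n →
    {k : ℕ | 1 ≤ k ∧ S2 k = n}.ncard = padicValNat 2 n := by
  have : Fact (Nat.Prime 2) := ⟨prime_two⟩
  intro n hn
  obtain ⟨m, rfl⟩ : ∃ m, n = m + 1 := ⟨n - 1, by omega⟩
  rw [setOf_S2_eq_succ, ← Finset.coe_Ioc, Set.ncard_coe_finset, card_Ioc,
    padicValNat_factorial_succ, Nat.add_sub_cancel]
end

section
/- For every n ≥ 1 one has S₂(2^n − n) = 2^n, and for every k ∈ ℕ one has S₂(k) = 2^n if and only if 2^n − n ≤ k ≤ 2^n − 1. -/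
open Nat

lemma padicValNat_two_factorial_two_pow (n : ℕ) : padicValNat 2 (2 ^ n)! = 2 ^ n - 1 := by
  induction n with
  | zero => simp
  | succ n ih =>
    rw [pow_succ', padicValNat_factorial_mul, ih]
    have := n.one_le_two_pow
    omega

lemma padicValNat_two_factorial_two_pow_sub_one (n : ℕ) :
    padicValNat 2 (2 ^ n - 1)! = 2 ^ n - 1 - n := by
  have h := padicValNat_two_factorial_two_pow n
  rw [← mul_factorial_pred (pow_ne_zero n two_ne_zero),
    padicValNat.mul (pow_ne_zero n two_ne_zero) (factorial_ne_zero _),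
    padicValNat.prime_pow] at h
  omega

lemma two_pow_dvd_factorial_iff {k m : ℕ} : 2 ^ k ∣ m ! ↔ k ≤ padicValNat 2 m ! :=
  padicValNat_dvd_iff_le (factorial_ne_zero m)

lemma S2_eq_iff {k m : ℕ} (hm : m ≠ 0) : S2 k = m ↔ 2 ^ k ∣ m ! ∧ ¬ 2 ^ k ∣ (m - 1)! := by
  obtain ⟨m, rfl⟩ := exists_eq_succ_of_ne_zero hm
  exact Nat.sInf_upward_closed_eq_succ_iff
    (fun _ _ hle hdvd => hdvd.trans (factorial_dvd_factorial hle)) m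

theorem stmt_12 : ∀ n : ℕ, 1 ≤ n →
    S2 (2 ^ n - n) = 2 ^ n ∧
    ∀ k : ℕ, (S2 k = 2 ^ n ↔ 2 ^ n - n ≤ k ∧ k ≤ 2 ^ n - 1) := by
  intro n hn
  have S2_eq_two_pow (k : ℕ) : S2 k = 2 ^ n ↔ 2 ^ n - n ≤ k ∧ k ≤ 2 ^ n - 1 := by
    rw [S2_eq_iff (pow_ne_zero n two_ne_zero), two_pow_dvd_factorial_iff,
      two_pow_dvd_factorial_iff, padicValNat_two_factorial_two_pow,
      padicValNat_two_factorial_two_pow_sub_one]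
    have := n.lt_two_pow_self
    omega
  exact ⟨(S2_eq_two_pow _).mpr ⟨le_rfl, by omega⟩, S2_eq_two_pow⟩
end

section
/- For every unsatisfiable hitting clause-set F one has Σ_{C ∈ F} 2^(n(F) − |C|) = 2^(n(F)) (equivalently, Σ_{C ∈ F} 2^(−|C|) = 1). -/
/-- A clause: a finite set of nonzero integers (literals) that is clash-free. -/
def IsClause (C : Finset ℤ) : Prop := (0 : ℤ) ∉ C ∧ ∀ x ∈ C, -x ∉ C

/-- A clause-set: a finite set of clauses. -/
def IsClauseSet (F : Finset (Finset ℤ)) : Prop := ∀ C ∈ F, IsClause C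

/-- The variables of a clause: the absolute values of its literals. -/
def clauseVar (C : Finset ℤ) : Finset ℕ := C.image Int.natAbs

/-- The variables of a clause-set. -/
def var (F : Finset (Finset ℤ)) : Finset ℕ := F.biUnion clauseVar

/-- The number of variables `n(F)`. -/
def numVar (F : Finset (Finset ℤ)) : ℕ := (var F).card

/-- The deficiency `δ(F) = c(F) - n(F)`. -/
def deficiency (F : Finset (Finset ℤ)) : ℤ := (F.card : ℤ) - (numVar F : ℤ)

/-- `F` is satisfiable iff some clause `C` intersects every clause of `F`. -/
def Satisfiable (F : Finset (Finset ℤ)) : Prop :=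
  ∃ C : Finset ℤ, IsClause C ∧ ∀ D ∈ F, (C ∩ D).Nonempty

/-- `F` is hitting iff any two distinct clauses of `F` clash. -/
def Hitting (F : Finset (Finset ℤ)) : Prop :=
  ∀ C ∈ F, ∀ D ∈ F, C ≠ D → ∃ x ∈ C, -x ∈ D

/-- `F` is minimally unsatisfiable. -/
def MinUnsat (F : Finset (Finset ℤ)) : Prop :=
  ¬ Satisfiable F ∧ ∀ G ⊂ F, Satisfiable G

/-- The number of full clauses of `F`. -/
def nfc (F : Finset (Finset ℤ)) : ℕ :=
  (F.filter (fun C => clauseVar C = var F)).card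

/-- The degree of a variable `v` in `F`. -/
def vdeg (F : Finset (Finset ℤ)) (v : ℕ) : ℕ :=
  (F.filter (fun C => v ∈ clauseVar C)).card

/-- The minimal variable-degree of `F` (for `n(F) > 0`). -/
noncomputable def minVarDeg (F : Finset (Finset ℤ)) : ℕ :=
  sInf {d : ℕ | ∃ v ∈ var F, vdeg F v = d}

/-!
A set `S` of variables is read as the assignment making exactly the variables of `S` true.
A clause `C` with `var C ⊆ V` is falsified by exactly `2 ^ (|V| - |C|)` of the assignments
`S ⊆ V`, since those are pinned down on `var C` and free elsewhere. For a hitting clause-set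
these sets of falsifying assignments are pairwise disjoint (two clashing clauses cannot both be
false), and for an unsatisfiable one they cover all `2 ^ |V|` assignments (otherwise the literals
true under an uncovered assignment form a clause meeting every clause of `F`).
-/

def LitTrue (S : Finset ℕ) (x : ℤ) : Prop := (0 < x ↔ x.natAbs ∈ S)

instance (S : Finset ℕ) : DecidablePred (LitTrue S) := fun x => by
  unfold LitTrue; infer_instance

def Falsifies (S : Finset ℕ) (C : Finset ℤ) : Prop := ∀ x ∈ C, ¬ LitTrue S x

instance (S : Finset ℕ) (C : Finset ℤ) : Decidable (Falsifies S C) := by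
  unfold Falsifies; infer_instance

def negVars (C : Finset ℤ) : Finset ℕ := {x ∈ C | x < 0}.image Int.natAbs

lemma litTrue_neg {S : Finset ℕ} {x : ℤ} (hx : x ≠ 0) : LitTrue S (-x) ↔ ¬ LitTrue S x := by
  have : 0 < -x ↔ ¬ 0 < x := by omega
  rw [LitTrue, LitTrue, Int.natAbs_neg, this]
  tauto

lemma IsClause.ne_zero {C : Finset ℤ} (hC : IsClause C) {x : ℤ} (hx : x ∈ C) : x ≠ 0 :=
  fun h => hC.1 (h ▸ hx)

lemma card_clauseVar {C : Finset ℤ} (hC : IsClause C) : (clauseVar C).card = C.card := by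
  refine Finset.card_image_of_injOn fun x hx y hy hxy => ?_
  rcases Int.natAbs_eq_natAbs_iff.mp hxy with h | h
  · exact h
  · exact absurd (h ▸ hx) (hC.2 y hy)

lemma negVars_subset_clauseVar (C : Finset ℤ) : negVars C ⊆ clauseVar C :=
  Finset.image_subset_image (Finset.filter_subset _ _)

lemma falsifies_iff_inter_clauseVar_eq {C : Finset ℤ} (hC : IsClause C) (S : Finset ℕ) :
    Falsifies S C ↔ S ∩ clauseVar C = negVars C := by
  simp only [Falsifies, LitTrue]
  constructor
  · intro hfal
    ext v
    simp only [negVars, clauseVar, Finset.mem_inter, Finset.mem_image, Finset.mem_filter]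
    constructor
    · rintro ⟨hvS, x, hx, rfl⟩
      have hx0 := hC.ne_zero hx
      exact ⟨x, ⟨hx, by_contra fun h => hfal x hx ⟨fun _ => hvS, fun _ => by omega⟩⟩, rfl⟩
    · rintro ⟨x, ⟨hx, hneg⟩, rfl⟩
      exact ⟨by_contra fun h => hfal x hx ⟨fun h' => absurd h' (by omega), h.elim⟩, x, hx, rfl⟩
  · intro heq x hx hlit
    rcases (hC.ne_zero hx).lt_or_gt with hneg | hpos
    · have : x.natAbs ∈ S ∩ clauseVar C := heq ▸ Finset.mem_image_of_mem _ (by simp [hx, hneg])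
      exact absurd (hlit.mpr (Finset.mem_inter.mp this).1) (by omega)
    · have : x.natAbs ∈ negVars C := heq ▸ Finset.mem_inter.mpr
        ⟨hlit.mp hpos, Finset.mem_image_of_mem _ hx⟩
      obtain ⟨y, hy, hyx⟩ := Finset.mem_image.mp this
      rw [Finset.mem_filter] at hy
      have : y = -x := by omega
      exact hC.2 x hx (this ▸ hy.1)

/-- The assignments `S ⊆ V` with prescribed trace `B` on `A ⊆ V` are the sets `B ∪ T`,
`T ⊆ V \ A`. -/
lemma Finset.card_filter_powerset_inter_eq {α : Type*} [DecidableEq α] {A B V : Finset α}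
    (hBA : B ⊆ A) (hAV : A ⊆ V) :
    {S ∈ V.powerset | S ∩ A = B}.card = 2 ^ (V.card - A.card) := by
  rw [← Finset.card_sdiff_of_subset hAV, ← Finset.card_powerset]
  symm
  refine Finset.card_nbij' (· ∪ B) (· \ A) ?_ ?_ ?_ ?_ <;> intro X hX <;>
    simp only [Finset.coe_powerset, Finset.coe_filter, Set.mem_preimage, Set.mem_powerset_iff,
      Set.mem_ofPred_eq, Finset.coe_subset, Finset.mem_powerset] at hX ⊢ <;>
    grind

lemma card_falsifying {V : Finset ℕ} {C : Finset ℤ} (hC : IsClause C) (hCV : clauseVar C ⊆ V) :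
    {S ∈ V.powerset | Falsifies S C}.card = 2 ^ (V.card - C.card) := by
  simp_rw [falsifies_iff_inter_clauseVar_eq hC]
  rw [Finset.card_filter_powerset_inter_eq (negVars_subset_clauseVar C) hCV, card_clauseVar hC]

lemma not_falsifies_of_clash {S : Finset ℕ} {C D : Finset ℤ} {x : ℤ} (hx : x ≠ 0) (hxC : x ∈ C)
    (hxD : -x ∈ D) (hSC : Falsifies S C) : ¬ Falsifies S D := fun hSD =>
  hSD (-x) hxD ((litTrue_neg hx).mpr (hSC x hxC))

def assignmentClause (V S : Finset ℕ) : Finset ℤ :=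
  V.image fun v => if v ∈ S then (v : ℤ) else -(v : ℤ)

lemma mem_assignmentClause {V S : Finset ℕ} (hV : 0 ∉ V) {x : ℤ} :
    x ∈ assignmentClause V S ↔ x ≠ 0 ∧ x.natAbs ∈ V ∧ LitTrue S x := by
  simp only [assignmentClause, LitTrue, Finset.mem_image]
  constructor
  · rintro ⟨v, hv, rfl⟩
    have : v ≠ 0 := ne_of_mem_of_not_mem hv hV
    by_cases hvS : v ∈ S <;>
      simp only [hvS, if_true, if_false, Int.natAbs_neg, Int.natAbs_natCast, hv, true_and, iff_true,
        iff_false] <;> omega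
  · rintro ⟨hx0, hxV, hxS⟩
    refine ⟨x.natAbs, hxV, ?_⟩
    by_cases h : x.natAbs ∈ S <;> simp only [h, if_true, if_false] <;> grind

lemma isClause_assignmentClause {V : Finset ℕ} (hV : 0 ∉ V) (S : Finset ℕ) :
    IsClause (assignmentClause V S) := by
  refine ⟨fun h => ((mem_assignmentClause hV).mp h).1 rfl, fun x hx hnx => ?_⟩
  obtain ⟨hx0, -, hxS⟩ := (mem_assignmentClause hV).mp hx
  exact (litTrue_neg hx0).mp ((mem_assignmentClause hV).mp hnx).2.2 hxS

lemma clauseVar_subset_var {F : Finset (Finset ℤ)} {C : Finset ℤ} (hC : C ∈ F) :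
    clauseVar C ⊆ var F :=
  Finset.subset_biUnion_of_mem clauseVar hC

lemma zero_notMem_var {F : Finset (Finset ℤ)} (hF : IsClauseSet F) : 0 ∉ var F := by
  simp only [var, clauseVar, Finset.mem_biUnion, Finset.mem_image, Int.natAbs_eq_zero, not_exists,
    not_and]
  rintro C hC x hx rfl
  exact (hF C hC).1 hx

lemma exists_falsifies_of_not_satisfiable {F : Finset (Finset ℤ)} (hF : IsClauseSet F)
    (hunsat : ¬ Satisfiable F) (S : Finset ℕ) : ∃ D ∈ F, Falsifies S D := by
  have h0 := zero_notMem_var hF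
  simp only [Satisfiable, not_exists, not_and, not_forall, Finset.not_nonempty_iff_eq_empty] at hunsat
  obtain ⟨D, hD, hempty⟩ := hunsat _ (isClause_assignmentClause h0 S)
  refine ⟨D, hD, fun x hx hxS => ?_⟩
  have hx' : x ∈ assignmentClause (var F) S :=
    (mem_assignmentClause h0).mpr ⟨(hF D hD).ne_zero hx,
      clauseVar_subset_var hD (Finset.mem_image_of_mem _ hx), hxS⟩
  exact Finset.notMem_empty x (hempty ▸ Finset.mem_inter.mpr ⟨hx', hx⟩)

theorem stmt_14 (F : Finset (Finset ℤ)) (hF : IsClauseSet F)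
    (hunsat : ¬ Satisfiable F) (hhit : Hitting F) :
    ∑ C ∈ F, 2 ^ (numVar F - C.card) = 2 ^ numVar F := by
  set falsifying := fun C => {S ∈ (var F).powerset | Falsifies S C}
  have hdisj : (F : Set (Finset ℤ)).PairwiseDisjoint falsifying := by
    intro C hC D hD hne
    obtain ⟨x, hxC, hxD⟩ := hhit C hC D hD hne
    refine Finset.disjoint_filter.mpr fun S _ hSC => ?_
    exact not_falsifies_of_clash ((hF C hC).ne_zero hxC) hxC hxD hSC
  have hcover : F.biUnion falsifying = (var F).powerset := by
    refine Finset.Subset.antisymm (Finset.biUnion_subset.mpr fun _ _ => Finset.filter_subset _ _)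
      fun S hS => ?_
    obtain ⟨D, hD, hSD⟩ := exists_falsifies_of_not_satisfiable hF hunsat S
    exact Finset.mem_biUnion.mpr ⟨D, hD, Finset.mem_filter.mpr ⟨hS, hSD⟩⟩
  calc ∑ C ∈ F, 2 ^ (numVar F - C.card)
      = ∑ C ∈ F, (falsifying C).card :=
        Finset.sum_congr rfl fun C hC => (card_falsifying (hF C hC) (clauseVar_subset_var hC)).symm
    _ = 2 ^ numVar F := by
        rw [← Finset.card_biUnion hdisj, hcover, Finset.card_powerset, numVar]
end
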